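/- arXiv:2504.20875 — 2 statements merged into one kernel-verified Lean document; each statement's English description precedes it below -/
import Mathlib

section
/- For integers a, b, k with k ≥ b > a ≥ 1, m ≥ 1 and 0 ≤ h ≤ m−1: Σ_{λ ∈ BD_{a,b,k}(m,h,a)} u^{ℓ_a(λ)} v^{ℓ_b(λ)} q^{|λ|} = u^{m−h} v^{h} q^{k·C(m,2) + k·C(h+1,2) + ma + (b−a)h} [m−1 choose h]_k, and Σ_{λ ∈ BD_{a,b,k}(m,h,b)} u^{ℓ_a(λ)} v^{ℓ_b(λ)} q^{|λ|} = u^{m−h−1} v^{h+1} q^{k·C(m,2) + k·C(h+1,2) + ma + (b−a)(h+1)} [m−1 choose h]_k. -/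
/-!
Deleting the largest part `k(h+m-1) + r` (`r ∈ {a, b}`) of a partition in `BD_{a,b,k}(m,h,r)`
leaves a partition in `BD_{a,b,k}(m-1)`, and the difference conditions pin down its largest part:
it is `k(h+m-2) + a` if it is `≡ a`, and `k(h+m-3) + b` if it is `≡ b`. Hence `BD(m,h,r)` is in
bijection with `BD(m-1,h,a) ⊔ BD(m-1,h-1,b)`, and the generating functions satisfy the
`q^k`-Pascal recurrence `[m-1 choose h] = q^{kh} [m-2 choose h] + [m-2 choose h-1]`.
-/

/-- The finite q-Pochhammer symbol `(t;q)_n = ∏_{i=0}^{n-1} (1 - t qⁱ)`. -/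
noncomputable def qPoch (t q : ℂ) (n : ℕ) : ℂ := ∏ i ∈ Finset.range n, (1 - t * q ^ i)

/-- The infinite q-Pochhammer symbol `(t;q)_∞ = ∏_{i≥0} (1 - t qⁱ)`. -/
noncomputable def qPochInf (t q : ℂ) : ℂ := ∏' i : ℕ, (1 - t * q ^ i)

/-- The Gaussian binomial coefficient `[A choose B]` in base `q`:
`(q;q)_A / ((q;q)_B (q;q)_{A-B})` for `A ≥ B ≥ 0`, and `0` otherwise. -/
noncomputable def gbinom (q : ℂ) (A B : ℕ) : ℂ :=
  if B ≤ A then qPoch q q A / (qPoch q q B * qPoch q q (A - B)) else 0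

/-- `lcount k c l` is the number of parts of `l` congruent to `c` modulo `k`. -/
def lcount (k c : ℕ) (l : List ℕ) : ℕ := (l.filter (fun x => x % k = c % k)).length

/-- Membership in `BD_{a,b,k}(m)`: partitions `(λ_1,…,λ_m)` with exactly `m` parts, each
`≡ a` or `b (mod k)`, `λ_m ∈ {a, b}`, and for consecutive parts:
`λ_i - λ_{i+1} ≥ k` with strict inequality if `λ_i ≡ b (mod k)`, and
`λ_i - λ_{i+1} ≤ 2k` with strict inequality if `λ_{i+1} ≡ a (mod k)`. -/
def memBD (a b k m : ℕ) (l : List ℕ) : Prop :=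
  l.Pairwise (· ≥ ·) ∧ l.length = m ∧
    (∀ x ∈ l, 0 < x ∧ (x % k = a % k ∨ x % k = b % k)) ∧
    (l.getLast? = some a ∨ l.getLast? = some b) ∧
    l.Chain' (fun x y => (y + k ≤ x ∧ (x % k = b % k → y + k < x)) ∧
      (x ≤ y + 2 * k ∧ (y % k = a % k → x < y + 2 * k)))

def stepBD (a b k x y : ℕ) : Prop :=
  (y + k ≤ x ∧ (x % k = b % k → y + k < x)) ∧
    (x ≤ y + 2 * k ∧ (y % k = a % k → x < y + 2 * k))

def setBD (a b k m N : ℕ) : Set (List ℕ) := {l | memBD a b k m l ∧ l.head? = some N}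

def weightBD (a b k : ℕ) (u v q : ℂ) (l : List ℕ) : ℂ :=
  u ^ lcount k a l * v ^ lcount k b l * q ^ l.sum

noncomputable def genBD (a b k : ℕ) (u v q : ℂ) (m N : ℕ) : ℂ :=
  ∑ᶠ l ∈ setBD a b k m N, weightBD a b k u v q l

section Residues

variable {a b k : ℕ}

lemma mod_ne_mod_of_lt (ha : 0 < a) (hab : a < b) (hbk : b ≤ k) : a % k ≠ b % k := by
  rcases hbk.lt_or_eq with hbk | rfl
  · rw [Nat.mod_eq_of_lt (hab.trans hbk), Nat.mod_eq_of_lt hbk]; omega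
  · rw [Nat.mod_self, Nat.mod_eq_of_lt hab]; omega

lemma exists_eq_mul_add_of_mod_eq {r y : ℕ} (hrk : r ≤ k) (hy : 0 < y)
    (h : y % k = r % k) : ∃ j, y = k * j + r := by
  have hry : r ≤ y := by
    by_contra! hyr
    rw [Nat.mod_eq_of_lt (hyr.trans_le hrk)] at h
    rcases hrk.lt_or_eq with hrk | rfl
    · rw [Nat.mod_eq_of_lt hrk] at h; omega
    · rw [Nat.mod_self] at h; omega
  obtain ⟨j, hj⟩ := (Nat.modEq_iff_dvd' hry).1 h.symm
  exact ⟨j, by omega⟩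

lemma eq_of_mul_lt_mul_add {i j : ℕ} (h₁ : k * i < k * j + k) (h₂ : k * j < k * i + k) :
    i = j := by
  have := Nat.lt_of_mul_lt_mul_left (a := k) (by rwa [mul_add_one] : k * i < k * (j + 1))
  have := Nat.lt_of_mul_lt_mul_left (a := k) (by rwa [mul_add_one] : k * j < k * (i + 1))
  omega

end Residues

section Step

variable {a b k r : ℕ}

lemma stepBD_mul_add_a_iff (ha : 0 < a) (hab : a < b) (hbk : b ≤ k) (hr : r = a ∨ r = b)
    {i j : ℕ} : stepBD a b k (k * i + r) (k * j + a) ↔ i = j + 1 := by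
  have hne := mod_ne_mod_of_lt ha hab hbk
  simp only [stepBD, Nat.mul_add_mod, imp_iff_not_or, not_true_eq_false, false_or]
  constructor
  · intro h
    refine eq_of_mul_lt_mul_add (k := k) ?_ ?_ <;> rw [mul_add_one] <;>
      rcases hr with rfl | rfl <;> omega
  · rintro rfl
    rw [mul_add_one]
    rcases hr with rfl | rfl <;> omega

lemma stepBD_mul_add_b_iff (ha : 0 < a) (hab : a < b) (hbk : b ≤ k) (hr : r = a ∨ r = b)
    {i j : ℕ} : stepBD a b k (k * i + r) (k * j + b) ↔ i = j + 2 := by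
  have hne := mod_ne_mod_of_lt ha hab hbk
  simp only [stepBD, Nat.mul_add_mod, imp_iff_not_or]
  constructor
  · intro h
    refine eq_of_mul_lt_mul_add (k := k) ?_ ?_ <;>
      rw [show k * (j + 2) = k * j + 2 * k by ring] <;> rcases hr with rfl | rfl <;> omega
  · rintro rfl
    rw [show k * (j + 2) = k * j + 2 * k by ring]
    rcases hr with rfl | rfl <;> omega

end Step

section Membership

variable {a b k : ℕ}

lemma memBD_singleton (ha : 0 < a) (hb : 0 < b) {m x : ℕ} :
    memBD a b k m [x] ↔ m = 1 ∧ (x = a ∨ x = b) := by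
  constructor
  · rintro ⟨-, hl, -, hlast, -⟩
    simp only [List.length_singleton, List.getLast?_singleton, Option.some_inj] at hl hlast
    exact ⟨hl.symm, hlast⟩
  · rintro ⟨rfl, hx⟩
    refine ⟨List.pairwise_singleton _ _, rfl, ?_, by simpa using hx, List.isChain_singleton _⟩
    simp only [List.mem_singleton, forall_eq]
    rcases hx with rfl | rfl
    exacts [⟨ha, Or.inl rfl⟩, ⟨hb, Or.inr rfl⟩]

lemma memBD_cons_cons {m x y : ℕ} {t : List ℕ} :
    memBD a b k (m + 1) (x :: y :: t) ↔
      (x % k = a % k ∨ x % k = b % k) ∧ stepBD a b k x y ∧ memBD a b k m (y :: t) := by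
  constructor
  · rintro ⟨hs, hl, hp, hlast, hc⟩
    have hc' := List.isChain_cons_cons.1 hc
    exact ⟨(hp x (by simp)).2, hc'.1, hs.of_cons, by simpa using hl,
      fun z hz ↦ hp z (List.mem_cons_of_mem _ hz), by rwa [List.getLast?_cons_cons] at hlast,
      hc'.2⟩
  · rintro ⟨hx, hxy, hs, hl, hp, hlast, hc⟩
    have hyx : y ≤ x := le_of_add_le_left hxy.1.1
    refine ⟨List.pairwise_cons.2 ⟨fun z hz ↦ ?_, hs⟩, by simpa using hl, fun z hz ↦ ?_,
      by rwa [List.getLast?_cons_cons], List.isChain_cons_cons.2 ⟨hxy, hc⟩⟩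
    · rcases List.mem_cons.1 hz with rfl | hz
      exacts [hyx, ((List.pairwise_cons.1 hs).1 z hz).trans hyx]
    · rcases List.mem_cons.1 hz with rfl | hz
      exacts [⟨(hp y (by simp)).1.trans_le hyx, hx⟩, hp z hz]

end Membership

section Sets

variable {a b k : ℕ}

lemma mul_add_le_of_mem_setBD (hab : a ≤ b) {n N : ℕ} {l : List ℕ}
    (hl : l ∈ setBD a b k (n + 1) N) : k * n + a ≤ N := by
  obtain ⟨hl, hN⟩ := hl
  induction l generalizing n N with
  | nil => simp at hN
  | cons x t ih =>
    obtain rfl : x = N := by simpa using hN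
    cases t with
    | nil =>
      obtain ⟨-, hlen, -, hlast, -⟩ := hl
      simp only [List.length_singleton, List.getLast?_singleton, Option.some_inj] at hlen hlast
      obtain rfl : n = 0 := by omega
      omega
    | cons y t =>
      cases n with
      | zero => simpa using hl.2.1
      | succ n =>
        obtain ⟨-, hxy, hy⟩ := memBD_cons_cons.1 hl
        have := ih hy rfl
        have := hxy.1.1
        rw [mul_add_one]
        omega

lemma le_of_mem_setBD {m N x : ℕ} {l : List ℕ} (hl : l ∈ setBD a b k m N) (hx : x ∈ l) :
    x ≤ N := by
  obtain ⟨⟨hs, -⟩, hN⟩ := hl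
  cases l with
  | nil => simp at hx
  | cons y t =>
    obtain rfl : y = N := by simpa using hN
    rcases List.mem_cons.1 hx with rfl | hx
    exacts [le_rfl, (List.pairwise_cons.1 hs).1 x hx]

lemma setBD_finite (m N : ℕ) : (setBD a b k m N).Finite := by
  refine ((List.finite_length_eq (Fin (N + 1)) m).image (List.map Fin.val)).subset ?_
  intro l hl
  have hbound : ∀ x ∈ l, x < N + 1 := fun x hx ↦ Nat.lt_succ_of_le (le_of_mem_setBD hl hx)
  have hlen := hl.1.2.1
  lift l to List (Fin (N + 1)) using hbound
  exact ⟨l, by simpa using hlen, rfl⟩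

lemma setBD_one (ha : 0 < a) (hb : 0 < b) (N : ℕ) :
    setBD a b k 1 N = {l | l = [N] ∧ (N = a ∨ N = b)} := by
  ext l
  constructor
  · rintro ⟨hl, hN⟩
    obtain ⟨x, rfl⟩ := List.length_eq_one_iff.1 hl.2.1
    obtain rfl : x = N := by simpa using hN
    exact ⟨rfl, ((memBD_singleton ha hb).1 hl).2⟩
  · rintro ⟨rfl, hN⟩
    exact ⟨(memBD_singleton ha hb).2 ⟨rfl, hN⟩, rfl⟩

lemma disjoint_setBD {m N N' : ℕ} (h : N ≠ N') :
    Disjoint (setBD a b k m N) (setBD a b k m N') :=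
  Set.disjoint_left.2 fun _ hl hl' ↦ h (Option.some_inj.1 (hl.2.symm.trans hl'.2))

lemma mem_setBD_succ_succ_iff (ha : 0 < a) (hab : a < b) (hbk : b ≤ k) {r : ℕ}
    (hr : r = a ∨ r = b) {n i : ℕ} {l : List ℕ} :
    l ∈ setBD a b k (n + 1 + 1) (k * i + r) ↔ ∃ t, l = (k * i + r) :: t ∧
      ((∃ j, i = j + 1 ∧ t ∈ setBD a b k (n + 1) (k * j + a)) ∨
        (∃ j, i = j + 2 ∧ t ∈ setBD a b k (n + 1) (k * j + b))) := by
  have hx : (k * i + r) % k = a % k ∨ (k * i + r) % k = b % k := by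
    rw [Nat.mul_add_mod]; rcases hr with rfl | rfl <;> simp
  constructor
  · rintro ⟨hl, hhead⟩
    obtain ⟨t, rfl⟩ : ∃ t, l = (k * i + r) :: t := by
      cases l with
      | nil => simp at hhead
      | cons x t => exact ⟨t, by simpa using hhead⟩
    obtain ⟨y, t, rfl⟩ : ∃ y t', t = y :: t' := by
      cases t with
      | nil => exact absurd hl.2.1 (by simp)
      | cons y t => exact ⟨y, t, rfl⟩
    obtain ⟨-, hstep, ht⟩ := memBD_cons_cons.1 hl
    obtain ⟨hy, hya | hyb⟩ := ht.2.2.1 y (by simp)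
    · obtain ⟨j, rfl⟩ := exists_eq_mul_add_of_mod_eq (hab.trans_le hbk).le hy hya
      exact ⟨_, rfl, Or.inl ⟨j, (stepBD_mul_add_a_iff ha hab hbk hr).1 hstep, ht, rfl⟩⟩
    · obtain ⟨j, rfl⟩ := exists_eq_mul_add_of_mod_eq hbk hy hyb
      exact ⟨_, rfl, Or.inr ⟨j, (stepBD_mul_add_b_iff ha hab hbk hr).1 hstep, ht, rfl⟩⟩
  · rintro ⟨t, rfl, ⟨j, rfl, ht, hhead⟩ | ⟨j, rfl, ht, hhead⟩⟩ <;>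
    obtain ⟨t, rfl⟩ : ∃ t', t = _ :: t' := by
      cases t with
      | nil => simp at hhead
      | cons y t => exact ⟨t, by simpa using hhead⟩
    · exact ⟨memBD_cons_cons.2 ⟨hx, (stepBD_mul_add_a_iff ha hab hbk hr).2 rfl, ht⟩, rfl⟩
    · exact ⟨memBD_cons_cons.2 ⟨hx, (stepBD_mul_add_b_iff ha hab hbk hr).2 rfl, ht⟩, rfl⟩

end Sets

section Decomposition

variable {a b k r : ℕ}

lemma setBD_succ_succ_zero (ha : 0 < a) (hab : a < b) (hbk : b ≤ k) (hr : r = a ∨ r = b)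
    (n : ℕ) :
    setBD a b k (n + 1 + 1) (k * (n + 1) + r) =
      ((k * (n + 1) + r) :: ·) '' setBD a b k (n + 1) (k * n + a) := by
  ext l
  rw [mem_setBD_succ_succ_iff ha hab hbk hr]
  constructor
  · rintro ⟨t, rfl, ⟨j, hj, ht⟩ | ⟨j, hj, ht⟩⟩
    · obtain rfl : j = n := by omega
      exact ⟨t, ht, rfl⟩
    · have := mul_add_le_of_mem_setBD hab.le ht
      obtain rfl : n = j + 1 := by omega
      rw [mul_add_one] at this
      omega
  · rintro ⟨t, ht, rfl⟩
    exact ⟨t, rfl, Or.inl ⟨n, rfl, ht⟩⟩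

lemma setBD_succ_succ_succ (ha : 0 < a) (hab : a < b) (hbk : b ≤ k) (hr : r = a ∨ r = b)
    (n h : ℕ) :
    setBD a b k (n + 1 + 1) (k * (h + 1 + (n + 1)) + r) =
      ((k * (h + 1 + (n + 1)) + r) :: ·) ''
        (setBD a b k (n + 1) (k * (h + 1 + n) + a) ∪ setBD a b k (n + 1) (k * (h + n) + b)) := by
  ext l
  rw [mem_setBD_succ_succ_iff ha hab hbk hr]
  constructor
  · rintro ⟨t, rfl, ⟨j, hj, ht⟩ | ⟨j, hj, ht⟩⟩
    · obtain rfl : j = h + 1 + n := by omega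
      exact ⟨t, Or.inl ht, rfl⟩
    · obtain rfl : j = h + n := by omega
      exact ⟨t, Or.inr ht, rfl⟩
  · rintro ⟨t, ht | ht, rfl⟩
    exacts [⟨t, rfl, Or.inl ⟨_, by omega, ht⟩⟩, ⟨t, rfl, Or.inr ⟨_, by omega, ht⟩⟩]

end Decomposition

section GeneratingFunction

variable {a b k r : ℕ} {u v q w : ℂ}

lemma lcount_cons (c x : ℕ) (l : List ℕ) :
    lcount k c (x :: l) = lcount k c l + if x % k = c % k then 1 else 0 := by
  by_cases hx : x % k = c % k <;> simp [lcount, hx]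

lemma weightBD_cons (ha : 0 < a) (hab : a < b) (hbk : b ≤ k)
    (hrw : (r = a ∧ w = u) ∨ (r = b ∧ w = v)) {x : ℕ} (hx : x % k = r % k) (l : List ℕ) :
    weightBD a b k u v q (x :: l) = w * q ^ x * weightBD a b k u v q l := by
  have hne := mod_ne_mod_of_lt ha hab hbk
  rcases hrw with ⟨rfl, rfl⟩ | ⟨rfl, rfl⟩ <;>
    simp only [weightBD, lcount_cons, List.sum_cons, hx, hne, Ne.symm hne, ↓reduceIte, add_zero,
      pow_succ] <;> ring

lemma finsum_weightBD_image_cons (ha : 0 < a) (hab : a < b) (hbk : b ≤ k)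
    (hrw : (r = a ∧ w = u) ∨ (r = b ∧ w = v)) (i : ℕ) (T : Set (List ℕ)) :
    ∑ᶠ l ∈ ((k * i + r) :: ·) '' T, weightBD a b k u v q l =
      w * q ^ (k * i + r) * ∑ᶠ t ∈ T, weightBD a b k u v q t := by
  rw [finsum_mem_image List.cons_injective.injOn, mul_finsum_mem]
  exact finsum_mem_congr rfl fun t _ ↦ weightBD_cons ha hab hbk hrw (Nat.mul_add_mod _ _ _) t

lemma genBD_one (ha : 0 < a) (hab : a < b) (hbk : b ≤ k)
    (hrw : (r = a ∧ w = u) ∨ (r = b ∧ w = v)) (h : ℕ) :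
    genBD a b k u v q 1 (k * h + r) = if h = 0 then w * q ^ r else 0 := by
  have hr : r = a ∨ r = b := hrw.imp And.left And.left
  rw [genBD, setBD_one ha (ha.trans hab)]
  split_ifs with h0
  · subst h0
    simp only [mul_zero, zero_add, hr, and_true, Set.ofPred_eq_eq_singleton, finsum_mem_singleton]
    rw [weightBD_cons ha hab hbk hrw rfl]
    simp [weightBD, lcount]
  · have hN : ¬(k * h + r = a ∨ k * h + r = b) := by
      have : k ≤ k * h := Nat.le_mul_of_pos_right k (Nat.pos_of_ne_zero h0)
      omega
    simp [hN]

lemma genBD_succ_succ_zero (ha : 0 < a) (hab : a < b) (hbk : b ≤ k)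
    (hrw : (r = a ∧ w = u) ∨ (r = b ∧ w = v)) (n : ℕ) :
    genBD a b k u v q (n + 1 + 1) (k * (n + 1) + r) =
      w * q ^ (k * (n + 1) + r) * genBD a b k u v q (n + 1) (k * n + a) := by
  rw [genBD, setBD_succ_succ_zero ha hab hbk (hrw.imp And.left And.left),
    finsum_weightBD_image_cons ha hab hbk hrw, genBD]

lemma genBD_succ_succ_succ (ha : 0 < a) (hab : a < b) (hbk : b ≤ k)
    (hrw : (r = a ∧ w = u) ∨ (r = b ∧ w = v)) (n h : ℕ) :
    genBD a b k u v q (n + 1 + 1) (k * (h + 1 + (n + 1)) + r) =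
      w * q ^ (k * (h + 1 + (n + 1)) + r) *
        (genBD a b k u v q (n + 1) (k * (h + 1 + n) + a) +
          genBD a b k u v q (n + 1) (k * (h + n) + b)) := by
  have hdisj : k * (h + 1 + n) + a ≠ k * (h + n) + b := by
    rw [show k * (h + 1 + n) = k * (h + n) + k by ring]; omega
  rw [genBD, setBD_succ_succ_succ ha hab hbk (hrw.imp And.left And.left),
    finsum_weightBD_image_cons ha hab hbk hrw, finsum_mem_union (disjoint_setBD hdisj)
      (setBD_finite _ _) (setBD_finite _ _), genBD, genBD]

end GeneratingFunction

lemma one_sub_mul_pow_ne_zero {𝕜 : Type*} [NormedDivisionRing 𝕜] {Q : 𝕜} (hQ : ‖Q‖ < 1)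
    (i : ℕ) : 1 - Q * Q ^ i ≠ 0 := by
  rw [sub_ne_zero, ← pow_succ']
  intro h
  have := congrArg norm h
  rw [norm_one, norm_pow] at this
  exact (pow_lt_one₀ (norm_nonneg Q) hQ i.succ_ne_zero).ne this.symm

section GaussianBinomial

variable {Q : ℂ}

lemma qPoch_zero (t q : ℂ) : qPoch t q 0 = 1 := Finset.prod_range_zero _

lemma qPoch_succ (t q : ℂ) (n : ℕ) : qPoch t q (n + 1) = qPoch t q n * (1 - t * q ^ n) :=
  Finset.prod_range_succ _ _

lemma qPoch_self_ne_zero (hQ : ∀ i : ℕ, 1 - Q * Q ^ i ≠ 0) (n : ℕ) : qPoch Q Q n ≠ 0 :=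
  Finset.prod_ne_zero_iff.2 fun i _ ↦ hQ i

lemma gbinom_of_lt {A B : ℕ} (h : A < B) : gbinom Q A B = 0 := by
  rw [gbinom, if_neg h.not_ge]

lemma gbinom_zero_right (hQ : ∀ i : ℕ, 1 - Q * Q ^ i ≠ 0) (n : ℕ) : gbinom Q n 0 = 1 := by
  rw [gbinom, if_pos n.zero_le, Nat.sub_zero, qPoch_zero, one_mul,
    div_self (qPoch_self_ne_zero hQ n)]

lemma gbinom_self (hQ : ∀ i : ℕ, 1 - Q * Q ^ i ≠ 0) (n : ℕ) : gbinom Q n n = 1 := by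
  rw [gbinom, if_pos le_rfl, Nat.sub_self, qPoch_zero, mul_one,
    div_self (qPoch_self_ne_zero hQ n)]

lemma gbinom_succ_succ (hQ : ∀ i : ℕ, 1 - Q * Q ^ i ≠ 0) (n t : ℕ) :
    gbinom Q (n + 1) (t + 1) = Q ^ (t + 1) * gbinom Q n (t + 1) + gbinom Q n t := by
  rcases lt_trichotomy n t with hlt | rfl | hgt
  · rw [gbinom_of_lt (by omega), gbinom_of_lt (by omega), gbinom_of_lt hlt]
    ring
  · rw [gbinom_self hQ, gbinom_self hQ, gbinom_of_lt (lt_add_one n)]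
    ring
  · obtain ⟨e, rfl⟩ : ∃ e, n = t + 1 + e := ⟨n - (t + 1), by omega⟩
    simp only [gbinom, show t ≤ t + 1 + e by omega, show t + 1 ≤ t + 1 + e by omega,
      show t + 1 ≤ t + 1 + e + 1 by omega, if_true, show t + 1 + e + 1 - (t + 1) = e + 1 by omega,
      show t + 1 + e - (t + 1) = e by omega, show t + 1 + e - t = e + 1 by omega, qPoch_succ]
    have h₁ := qPoch_self_ne_zero hQ (t + 1 + e)
    have h₂ := qPoch_self_ne_zero hQ e
    have h₃ := qPoch_self_ne_zero hQ t
    have h₄ := hQ e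
    have h₅ := hQ t
    field_simp
    ring

end GaussianBinomial

lemma choose_two_succ (n : ℕ) : (n + 1).choose 2 = n.choose 2 + n := by
  rw [Nat.choose_succ_succ', Nat.choose_one_right, add_comm]

theorem genBD_eq_mul_gbinom {a b k : ℕ} {u v q : ℂ} (ha : 0 < a) (hab : a < b) (hbk : b ≤ k)
    (hQ : ∀ i : ℕ, 1 - q ^ k * (q ^ k) ^ i ≠ 0) (n h : ℕ) :
    genBD a b k u v q (n + 1) (k * (h + n) + a) =
        u ^ (n + 1 - h) * v ^ h *
          q ^ (k * (n + 1).choose 2 + k * (h + 1).choose 2 + (n + 1) * a + (b - a) * h) *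
          gbinom (q ^ k) n h ∧
      genBD a b k u v q (n + 1) (k * (h + n) + b) =
        u ^ (n - h) * v ^ (h + 1) *
          q ^ (k * (n + 1).choose 2 + k * (h + 1).choose 2 + (n + 1) * a + (b - a) * (h + 1)) *
          gbinom (q ^ k) n h := by
  have hwa : (a = a ∧ u = u) ∨ (a = b ∧ u = v) := Or.inl ⟨rfl, rfl⟩
  have hwb : (b = a ∧ v = u) ∨ (b = b ∧ v = v) := Or.inr ⟨rfl, rfl⟩
  obtain ⟨d, rfl⟩ : ∃ d, b = a + d := ⟨b - a, by omega⟩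
  rw [Nat.add_sub_cancel_left]
  induction n generalizing h with
  | zero =>
    rw [add_zero, genBD_one ha hab hbk hwa, genBD_one ha hab hbk hwb]
    cases h with
    | zero => simp [gbinom_zero_right hQ, pow_add]
    | succ h => simp [gbinom_of_lt]
  | succ n ih =>
    cases h with
    | zero =>
      rw [zero_add, genBD_succ_succ_zero ha hab hbk hwa, genBD_succ_succ_zero ha hab hbk hwb]
      obtain ⟨iha, -⟩ := ih 0
      rw [zero_add] at iha
      rw [iha, gbinom_zero_right hQ, gbinom_zero_right hQ, choose_two_succ (n + 1)]
      simp only [Nat.sub_zero]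
      constructor <;> ring
    | succ h =>
      rw [genBD_succ_succ_succ ha hab hbk hwa, genBD_succ_succ_succ ha hab hbk hwb,
        (ih (h + 1)).1, (ih h).2, gbinom_succ_succ hQ]
      rcases le_or_gt h n with hle | hlt
      · obtain ⟨e, rfl⟩ : ∃ e, n = h + e := ⟨n - h, by omega⟩
        rw [show h + e + 1 - (h + 1) = e by omega, show h + e - h = e by omega,
          show h + e + 1 + 1 - (h + 1) = e + 1 by omega,
          choose_two_succ (h + e + 1), choose_two_succ (h + 1)]
        constructor <;> ring
      · rw [gbinom_of_lt hlt, gbinom_of_lt (by omega : n < h + 1)]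
        simp

theorem gen_BD_mha_general (a b k m h : ℕ) (ha : 1 ≤ a) (hab : a < b) (hbk : b ≤ k)
    (hm : 1 ≤ m) (q u v : ℂ) (hq : ‖q‖ < 1) :
    (∑ᶠ l ∈ {l : List ℕ | memBD a b k m l ∧ l.head? = some (k * h + k * (m - 1) + a)},
        u ^ lcount k a l * v ^ lcount k b l * q ^ l.sum
      = u ^ (m - h) * v ^ h *
          q ^ (k * Nat.choose m 2 + k * Nat.choose (h + 1) 2 + m * a + (b - a) * h) *
          gbinom (q ^ k) (m - 1) h)
    ∧ (∑ᶠ l ∈ {l : List ℕ | memBD a b k m l ∧ l.head? = some (k * h + k * (m - 1) + b)},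
        u ^ lcount k a l * v ^ lcount k b l * q ^ l.sum
      = u ^ (m - h - 1) * v ^ (h + 1) *
          q ^ (k * Nat.choose m 2 + k * Nat.choose (h + 1) 2 + m * a + (b - a) * (h + 1)) *
          gbinom (q ^ k) (m - 1) h) := by
  obtain ⟨n, rfl⟩ : ∃ n, m = n + 1 := ⟨m - 1, by omega⟩
  have hqk : ‖q ^ k‖ < 1 := by
    rw [norm_pow]
    exact pow_lt_one₀ (norm_nonneg q) hq (by omega)
  have hhead (r : ℕ) : k * h + k * (n + 1 - 1) + r = k * (h + n) + r := by
    rw [Nat.add_sub_cancel, mul_add]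
  rw [hhead, hhead, Nat.sub_right_comm, Nat.add_sub_cancel]
  exact genBD_eq_mul_gbinom ha hab hbk (one_sub_mul_pow_ne_zero hqk) n h

/-- Generating functions for the partitions in `BD_{a,b,k}(m,h,a)` (largest part
`kh+k(m-1)+a`) and `BD_{a,b,k}(m,h,b)` (largest part `kh+k(m-1)+b`). -/
theorem gen_BD_mha (a b k m h : ℕ) (ha : 1 ≤ a) (hab : a < b) (hbk : b ≤ k)
    (hm : 1 ≤ m) (hh : h ≤ m - 1) (q u v : ℂ) (hq : ‖q‖ < 1) :
    (∑ᶠ l ∈ {l : List ℕ | memBD a b k m l ∧ l.head? = some (k * h + k * (m - 1) + a)},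
        u ^ lcount k a l * v ^ lcount k b l * q ^ l.sum
      = u ^ (m - h) * v ^ h *
          q ^ (k * Nat.choose m 2 + k * Nat.choose (h + 1) 2 + m * a + (b - a) * h) *
          gbinom (q ^ k) (m - 1) h)
    ∧ (∑ᶠ l ∈ {l : List ℕ | memBD a b k m l ∧ l.head? = some (k * h + k * (m - 1) + b)},
        u ^ lcount k a l * v ^ lcount k b l * q ^ l.sum
      = u ^ (m - h - 1) * v ^ (h + 1) *
          q ^ (k * Nat.choose m 2 + k * Nat.choose (h + 1) 2 + m * a + (b - a) * (h + 1)) *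
          gbinom (q ^ k) (m - 1) h) :=
  gen_BD_mha_general a b k m h ha hab hbk hm q u v hq
end

section
/- For integers a, b, k with k ≥ b > a ≥ 1, m ≥ 2 and 1 ≤ h ≤ m−1: Σ_{λ ∈ BD_{a,b,k}(m+1,h,a)} u^{ℓ_a(λ)} v^{ℓ_b(λ)} q^{|λ|} = u q^{kh+km+a} ( Σ_{λ ∈ BD_{a,b,k}(m,h,a)} u^{ℓ_a(λ)} v^{ℓ_b(λ)} q^{|λ|} + Σ_{λ ∈ BD_{a,b,k}(m,h−1,b)} u^{ℓ_a(λ)} v^{ℓ_b(λ)} q^{|λ|} ). -/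
/-!
If `N ≡ a (mod k)` is the largest part of a partition in `BD_{a,b,k}(m+1)`, the difference `N - λ₂`
lies in `[k, 2k]` (strictly below `2k` when `λ₂ ≡ a`) and is fixed modulo `k`, because `a` and `b`
are distinct residues. Hence `λ₂ = N - k` when `λ₂ ≡ a` and `λ₂ = N - 2k - a + b` when `λ₂ ≡ b`, so
deleting `N` is a bijection onto `BD(m, h, a) ∪ BD(m, h-1, b)`, dividing the weight by `u q^N`.
-/

open List

theorem Nat.ModEq.eq_of_lt_add_of_lt_add {k x y : ℕ} (h : x ≡ y [MOD k]) (hxy : x < y + k)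
    (hyx : y < x + k) : x = y :=
  h.eq_of_abs_lt (by rw [abs_sub_lt_iff]; omega)

theorem Nat.mod_ne_mod_of_lt_of_le {a b k : ℕ} (ha : 1 ≤ a) (hab : a < b) (hbk : b ≤ k) :
    a % k ≠ b % k := fun h =>
  have hdvd : k ∣ b - a := (Nat.modEq_iff_dvd' hab.le).mp h
  absurd (Nat.le_of_dvd (by omega) hdvd) (by omega)

theorem List.finite_length_eq_forall_le (n N : ℕ) :
    {l : List ℕ | l.length = n ∧ ∀ x ∈ l, x ≤ N}.Finite := by
  refine ((finite_length_eq (Fin (N + 1)) n).image (map Fin.val)).subset ?_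
  rintro l ⟨hlen, hle⟩
  refine ⟨l.map (Fin.ofNat (N + 1)), by simpa using hlen, ?_⟩
  rw [map_map]
  exact (map_congr_left fun x hx => by
    simp [Nat.mod_eq_of_lt (Nat.lt_succ_of_le (hle x hx))]).trans (map_id l)

def bdGap (a b k x y : ℕ) : Prop :=
  (y + k ≤ x ∧ (x % k = b % k → y + k < x)) ∧ (x ≤ y + 2 * k ∧ (y % k = a % k → x < y + 2 * k))

/-- `BD_{a,b,k}(n, h, c)` of the paper is `bdWithLargest a b k n (k * h + k * (n - 1) + c)`. -/
def bdWithLargest (a b k n N : ℕ) : Set (List ℕ) :=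
  {l | memBD a b k n l ∧ l.head? = some N}

def bdWeight (k a b : ℕ) (u v q : ℂ) (l : List ℕ) : ℂ :=
  u ^ lcount k a l * v ^ lcount k b l * q ^ l.sum

section BD

variable {a b k : ℕ}

theorem memBD_cons_cons_iff {n x y : ℕ} {t : List ℕ} :
    memBD a b k (n + 1) (x :: y :: t) ↔
      memBD a b k n (y :: t) ∧ 0 < x ∧ (x % k = a % k ∨ x % k = b % k) ∧ bdGap a b k x y := by
  simp only [memBD, pairwise_cons, length_cons, mem_cons, forall_eq_or_imp, getLast?_cons_cons,
    Nat.add_right_cancel_iff]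
  constructor
  · rintro ⟨⟨-, hsort⟩, hlen, ⟨hx, hparts⟩, hlast, hchain⟩
    obtain ⟨hgap, hchain⟩ := isChain_cons_cons.1 hchain
    exact ⟨⟨hsort, hlen, hparts, hlast, hchain⟩, hx.1, hx.2, hgap⟩
  · rintro ⟨⟨hsort, hlen, hparts, hlast, hchain⟩, hxpos, hxmod, hgap⟩
    have hyx : y ≤ x := le_of_add_le_left hgap.1.1
    exact ⟨⟨⟨hyx, fun z hz => (hsort.1 z hz).trans hyx⟩, hsort⟩, hlen, ⟨⟨hxpos, hxmod⟩, hparts⟩,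
      hlast, isChain_cons_cons.2 ⟨hgap, hchain⟩⟩

theorem bdGap_iff_of_mod_eq (ha : 1 ≤ a) (hab : a < b) (hbk : b ≤ k) {x y : ℕ}
    (hx : x % k = a % k) (hy : y % k = a % k ∨ y % k = b % k) :
    bdGap a b k x y ↔ x = y + k ∨ x + b = y + 2 * k + a := by
  have hne := Nat.mod_ne_mod_of_lt_of_le ha hab hbk
  constructor
  · rintro ⟨⟨hlow, -⟩, hup, hupa⟩
    rcases hy with hya | hyb
    · left
      refine Nat.ModEq.eq_of_lt_add_of_lt_add (k := k) ?_ (by have := hupa hya; omega) (by omega)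
      calc x ≡ a [MOD k] := hx
        _ ≡ y [MOD k] := hya.symm
        _ ≡ y + k [MOD k] := (Nat.add_mod_right y k).symm
    · right
      refine Nat.ModEq.eq_of_lt_add_of_lt_add (k := k) ?_ (by omega) (by omega)
      calc x + b ≡ a + b [MOD k] := Nat.ModEq.add_right b hx
        _ ≡ y + a [MOD k] := by rw [add_comm a b]; exact Nat.ModEq.add_right a hyb.symm
        _ ≡ y + 2 * k + a [MOD k] := by
          rw [add_right_comm]; exact (Nat.add_mul_mod_self_right (y + a) 2 k).symm
  · rintro (rfl | hxy)
    · exact ⟨⟨le_rfl, fun hb => absurd (hx.symm.trans hb) hne⟩, by omega, fun _ => by omega⟩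
    · exact ⟨⟨by omega, fun _ => by omega⟩, by omega, fun _ => by omega⟩

theorem bdWithLargest_succ_eq_image (ha : 1 ≤ a) (hab : a < b) (hbk : b ≤ k) {n N N₁ N₂ : ℕ}
    (hn : 1 ≤ n) (hN : N % k = a % k) (hN₁ : N = N₁ + k) (hN₂ : N + b = N₂ + 2 * k + a) :
    bdWithLargest a b k (n + 1) N =
      (N :: ·) '' (bdWithLargest a b k n N₁ ∪ bdWithLargest a b k n N₂) := by
  ext l
  constructor
  · rintro ⟨hl, hhead⟩
    obtain ⟨t, rfl⟩ := head?_eq_some_iff.1 hhead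
    have hlen : t.length = n := by simpa using hl.2.1
    obtain ⟨y, t, rfl⟩ := exists_cons_of_length_pos (show 0 < t.length by omega)
    obtain ⟨hrest, -, -, hgap⟩ := memBD_cons_cons_iff.1 hl
    have hy := (hrest.2.2.1 y mem_cons_self).2
    refine ⟨y :: t, ?_, rfl⟩
    rcases (bdGap_iff_of_mod_eq ha hab hbk hN hy).1 hgap with hy₁ | hy₂
    · exact Or.inl ⟨hrest, by simp only [head?_cons]; congr 1; omega⟩
    · exact Or.inr ⟨hrest, by simp only [head?_cons]; congr 1; omega⟩
  · rintro ⟨t, ht, rfl⟩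
    obtain ⟨hrest, hhead⟩ : memBD a b k n t ∧ (t.head? = some N₁ ∨ t.head? = some N₂) := by
      rcases ht with ⟨hrest, hhead⟩ | ⟨hrest, hhead⟩
      exacts [⟨hrest, Or.inl hhead⟩, ⟨hrest, Or.inr hhead⟩]
    obtain ⟨y, t, rfl⟩ := exists_cons_of_ne_nil (show t ≠ [] by rintro rfl; simp at hhead)
    have hy := (hrest.2.2.1 y mem_cons_self).2
    simp only [head?_cons, Option.some.injEq] at hhead
    refine ⟨memBD_cons_cons_iff.2 ⟨hrest, by omega, Or.inl hN, ?_⟩, rfl⟩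
    exact (bdGap_iff_of_mod_eq ha hab hbk hN hy).2 (by omega)

theorem finite_bdWithLargest (n N : ℕ) : (bdWithLargest a b k n N).Finite := by
  refine (finite_length_eq_forall_le n N).subset ?_
  rintro l ⟨hl, hhead⟩
  obtain ⟨t, rfl⟩ := head?_eq_some_iff.1 hhead
  refine ⟨hl.2.1, forall_mem_cons.2 ⟨le_rfl, (pairwise_cons.1 hl.1).1⟩⟩

theorem bdWeight_cons (hne : a % k ≠ b % k) (u v q : ℂ) {x : ℕ} (hx : x % k = a % k)
    (t : List ℕ) : bdWeight k a b u v q (x :: t) = u * q ^ x * bdWeight k a b u v q t := by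
  simp only [bdWeight, lcount, filter_cons, hx, hne, decide_true, decide_false, if_true,
    Bool.false_eq_true, if_false, length_cons, sum_cons, pow_succ, pow_add]
  ring

theorem finsum_bdWeight_bdWithLargest_succ (ha : 1 ≤ a) (hab : a < b) (hbk : b ≤ k)
    {n N N₁ N₂ : ℕ} (hn : 1 ≤ n) (hN : N % k = a % k) (hN₁ : N = N₁ + k)
    (hN₂ : N + b = N₂ + 2 * k + a) (u v q : ℂ) :
    ∑ᶠ l ∈ bdWithLargest a b k (n + 1) N, bdWeight k a b u v q l =
      u * q ^ N * (∑ᶠ t ∈ bdWithLargest a b k n N₁, bdWeight k a b u v q t +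
        ∑ᶠ t ∈ bdWithLargest a b k n N₂, bdWeight k a b u v q t) := by
  have hdisj : Disjoint (bdWithLargest a b k n N₁) (bdWithLargest a b k n N₂) :=
    Set.disjoint_left.2 fun t h₁ h₂ => by
      have := h₁.2.symm.trans h₂.2
      simp only [Option.some.injEq] at this
      omega
  rw [bdWithLargest_succ_eq_image ha hab hbk hn hN hN₁ hN₂, finsum_mem_image cons_injective.injOn,
    finsum_mem_union hdisj (finite_bdWithLargest ..) (finite_bdWithLargest ..), mul_add,
    mul_finsum_mem, mul_finsum_mem]
  simp only [bdWeight_cons (Nat.mod_ne_mod_of_lt_of_le ha hab hbk) u v q hN]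

end BD

theorem gen_BD_recur_general (a b k m h : ℕ) (ha : 1 ≤ a) (hab : a < b) (hbk : b ≤ k)
    (hm : 2 ≤ m) (hh1 : 1 ≤ h) (q u v : ℂ) :
    ∑ᶠ l ∈ {l : List ℕ | memBD a b k (m + 1) l ∧ l.head? = some (k * h + k * m + a)},
        u ^ lcount k a l * v ^ lcount k b l * q ^ l.sum
      = u * q ^ (k * h + k * m + a) *
          ((∑ᶠ l ∈ {l : List ℕ | memBD a b k m l ∧ l.head? = some (k * h + k * (m - 1) + a)},
              u ^ lcount k a l * v ^ lcount k b l * q ^ l.sum) +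
            ∑ᶠ l ∈ {l : List ℕ |
                memBD a b k m l ∧ l.head? = some (k * (h - 1) + k * (m - 1) + b)},
              u ^ lcount k a l * v ^ lcount k b l * q ^ l.sum) := by
  obtain ⟨m, rfl⟩ : ∃ m', m = m' + 1 := ⟨m - 1, by omega⟩
  obtain ⟨h, rfl⟩ : ∃ h', h = h' + 1 := ⟨h - 1, by omega⟩
  simp only [Nat.add_sub_cancel]
  have hN : (k * (h + 1) + k * (m + 1) + a) % k = a % k := by
    rw [show k * (h + 1) + k * (m + 1) + a = a + k * (h + m + 2) by ring,
      Nat.add_mul_mod_self_left]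
  exact finsum_bdWeight_bdWithLargest_succ ha hab hbk (by omega) hN (by ring) (by ring) u v q

/-- Recurrence for the basis `BD_{a,b,k}`: for `m ≥ 2` and `1 ≤ h ≤ m-1`, removing the
largest part `kh+km+a` from a partition in `BD_{a,b,k}(m+1,h,a)` gives
`Σ_{BD(m+1,h,a)} = u q^{kh+km+a} (Σ_{BD(m,h,a)} + Σ_{BD(m,h-1,b)})`. -/
theorem gen_BD_recur (a b k m h : ℕ) (ha : 1 ≤ a) (hab : a < b) (hbk : b ≤ k)
    (hm : 2 ≤ m) (hh1 : 1 ≤ h) (hh2 : h ≤ m - 1) (q u v : ℂ) (hq : ‖q‖ < 1) :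
    ∑ᶠ l ∈ {l : List ℕ | memBD a b k (m + 1) l ∧ l.head? = some (k * h + k * m + a)},
        u ^ lcount k a l * v ^ lcount k b l * q ^ l.sum
      = u * q ^ (k * h + k * m + a) *
          ((∑ᶠ l ∈ {l : List ℕ | memBD a b k m l ∧ l.head? = some (k * h + k * (m - 1) + a)},
              u ^ lcount k a l * v ^ lcount k b l * q ^ l.sum) +
            ∑ᶠ l ∈ {l : List ℕ |
                memBD a b k m l ∧ l.head? = some (k * (h - 1) + k * (m - 1) + b)},
              u ^ lcount k a l * v ^ lcount k b l * q ^ l.sum) :=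
  gen_BD_recur_general a b k m h ha hab hbk hm hh1 q u v
end
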